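/- arXiv:2410.21436 — 4 statements merged into one kernel-verified Lean document; each statement's English description precedes it below -/
import Mathlib

section
/- Let G ⊂ W(D_n) act on Pic = Z^{n+2} via Φ, and suppose some element g ∈ G contains a signed permutation cycle with an odd number of minus signs. Then the coboundary f_{−1} := (g ↦ (Φ(g) − I)e_{−1})_{g∈G} does not lie in the Z-span of the coboundaries f_1, ..., f_n, where f_i(g) = (Φ(g) − I)e_i; consequently Z⟨f_{−1}, f_1, ..., f_n⟩ / Z⟨f_1, ..., f_n⟩ ≅ Z/2. -/
/-- The global sign flip on all `2n` symbols. -/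
def flipPerm (n : ℕ) : Equiv.Perm (Fin n × Bool) :=
  Equiv.prodCongr (Equiv.refl (Fin n)) (Equiv.swap true false)

/-- `W(B_n)`, realized as the group of permutations of the `2n` symbols
`j^±` commuting with the simultaneous sign flip. -/
def WBgroup (n : ℕ) : Subgroup (Equiv.Perm (Fin n × Bool)) :=
  Subgroup.centralizer {flipPerm n}

/-- The number `t` of sign changes of a signed permutation `g = c_{j_1}⋯c_{j_t}·τ`. -/
def flipCount {n : ℕ} (g : Equiv.Perm (Fin n × Bool)) : ℕ :=
  (Finset.univ.filter fun j : Fin n => (g (j, true)).2 = false).card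

/-- The conic-bundle representation `Φ` of `W(D_n)` on `Pic = ℤ^{n+2}`, written blockwise
on indices `Fin 2 ⊕ Fin n` (where `inl 0 = l₋₁`, `inl 1 = l₀`, `inr i = l_i`): the
lower-right block is the signed permutation matrix `Ψ(g)`, the row-`l₀` entries over
column `l_i` are `b'(i) = 1` exactly when the nonzero entry of column `i` of `Ψ(g)` is
`-1`, the column-`l₋₁` entries in row `l_i` are `c'(i) = -1` exactly when the nonzero
entry of row `i` of `Ψ(g)` is `-1`, and the upper-left block is `[[1,0],[t/2,1]]`. -/
def PhiP {n : ℕ} (g : Equiv.Perm (Fin n × Bool)) :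
    Matrix (Fin 2 ⊕ Fin n) (Fin 2 ⊕ Fin n) ℤ :=
  Matrix.of fun r c =>
    match r, c with
    | Sum.inl r', Sum.inl c' =>
        if r' = 0 then (if c' = 0 then 1 else 0)
        else if c' = 0 then ((flipCount g / 2 : ℕ) : ℤ) else 1
    | Sum.inl r', Sum.inr i =>
        if r' = 0 then 0 else if (g⁻¹ (i, true)).2 = false then 1 else 0
    | Sum.inr i, Sum.inl c' =>
        if c' = 0 then (if (g (i, true)).2 = false then -1 else 0) else 0
    | Sum.inr i, Sum.inr j =>
        if j = (g (i, true)).1 then (if (g (i, true)).2 = false then -1 else 1) else 0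

/-- The action of `Φ(g)` on `Pic = ℤ^{n+2}` as a linear map. -/
def PhiL {n : ℕ} (g : Equiv.Perm (Fin n × Bool)) :
    ((Fin 2 ⊕ Fin n) → ℤ) →ₗ[ℤ] ((Fin 2 ⊕ Fin n) → ℤ) :=
  (PhiP g).mulVecLin

/-- The orbit of an index `j` under the underlying permutation `pr(g)` of `g`. -/
def orbitOf {n : ℕ} (g : Equiv.Perm (Fin n × Bool)) (j : Fin n) : Set (Fin n) :=
  {i | ∃ k : ℕ, ((g ^ k) (j, true)).1 = i}

/-- The signed permutation cycle of `g` through `j` has an odd number of minus signs. -/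
def oddOrbitAt {n : ℕ} (g : Equiv.Perm (Fin n × Bool)) (j : Fin n) : Prop :=
  Odd (Set.ncard {i | i ∈ orbitOf g j ∧ (g (i, true)).2 = false})

/-- `Λ(g)`: the number of signed permutation cycles `β` of `g` with `σ(β) = -1`. -/
noncomputable def Lambda {n : ℕ} (g : Equiv.Perm (Fin n × Bool)) : ℕ :=
  Set.ncard {O : Set (Fin n) | ∃ j : Fin n, O = orbitOf g j ∧ oddOrbitAt g j}

/-- The standard basis vector `e_idx` of `Pic = ℤ^{n+2}`. -/
def stdBasis {n : ℕ} (idx : Fin 2 ⊕ Fin n) : (Fin 2 ⊕ Fin n) → ℤ :=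
  fun r => if r = idx then 1 else 0

/-- The principal cocycle `f_idx : g ↦ (Φ(g) - I)·e_idx` on a subgroup `G`. -/
def Fcoc {n : ℕ} (G : Subgroup (Equiv.Perm (Fin n × Bool))) (idx : Fin 2 ⊕ Fin n) :
    G → ((Fin 2 ⊕ Fin n) → ℤ) :=
  fun g => PhiL (g : Equiv.Perm (Fin n × Bool)) (stdBasis idx) - stdBasis idx

section Aux
variable {n : ℕ}

lemma Fcoc_apply (G : Subgroup (Equiv.Perm (Fin n × Bool))) (idx : Fin 2 ⊕ Fin n)
    (g : G) (r : Fin 2 ⊕ Fin n) :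
    Fcoc G idx g r = PhiP (g : Equiv.Perm (Fin n × Bool)) r idx - (if r = idx then 1 else 0) := by
  simp [Fcoc, PhiL, Matrix.mulVecLin_apply, Matrix.mulVec, dotProduct, stdBasis,
    mul_ite, Finset.sum_ite_eq']

lemma flip_apply (x : Fin n) (s : Bool) : flipPerm n (x, s) = (x, !s) := by
  cases s <;> simp [flipPerm, Equiv.swap_apply_def]

lemma comm_apply {g : Equiv.Perm (Fin n × Bool)} (hg : g ∈ WBgroup n) (x : Fin n) (s : Bool) :
    g (x, !s) = ((g (x, s)).1, !(g (x, s)).2) := by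
  have h := (Subgroup.mem_centralizer_iff.mp hg) (flipPerm n) rfl
  have h2 : (flipPerm n * g) (x, s) = (g * flipPerm n) (x, s) := by rw [h]
  simp only [Equiv.Perm.mul_apply, flip_apply] at h2
  rw [← h2]
  obtain ⟨a, b⟩ := g (x, s)
  exact flip_apply a b

lemma inv_sign {g : Equiv.Perm (Fin n × Bool)} (hg : g ∈ WBgroup n) (i : Fin n)
    (h : (g⁻¹ (i, true)).2 = false) :
    g ((g⁻¹ (i, true)).1, true) = (i, false) := by
  have h1 : g ((g⁻¹ (i, true)).1, false) = (i, true) := by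
    have e : ((g⁻¹ (i, true)).1, false) = g⁻¹ (i, true) := Prod.ext rfl h.symm
    rw [e, Equiv.Perm.inv_def, Equiv.apply_symm_apply]
  have h2 := comm_apply hg ((g⁻¹ (i, true)).1) false
  rw [h1] at h2
  simpa using h2

lemma flipCount_inv {g : Equiv.Perm (Fin n × Bool)} (hg : g ∈ WBgroup n) :
    flipCount g⁻¹ = flipCount g := by
  have hg' : g⁻¹ ∈ WBgroup n := (WBgroup n).inv_mem hg
  unfold flipCount
  apply Finset.card_bij' (fun i _ => (g⁻¹ (i, true)).1) (fun k _ => (g (k, true)).1)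
  · intro i hi
    simp only [Finset.mem_filter, Finset.mem_univ, true_and] at hi ⊢
    rw [inv_sign hg i hi]
  · intro k hk
    simp only [Finset.mem_filter, Finset.mem_univ, true_and] at hk ⊢
    have := inv_sign hg' k (by simpa using hk)
    simp only [inv_inv] at this
    rw [this]
  · intro i hi
    simp only [Finset.mem_filter, Finset.mem_univ, true_and] at hi
    rw [inv_sign hg i hi]
  · intro k hk
    simp only [Finset.mem_filter, Finset.mem_univ, true_and] at hk
    have := inv_sign hg' k (by simpa using hk)
    simp only [inv_inv] at this
    rw [this]

lemma rel (G : Subgroup (Equiv.Perm (Fin n × Bool))) (hG : G ≤ WBgroup n)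
    (hD : ∀ g ∈ G, Even (flipCount g)) :
    Fcoc G (Sum.inl 0) + Fcoc G (Sum.inl 0) = ∑ i : Fin n, Fcoc G (Sum.inr i) := by
  funext g r
  have hg : (g : Equiv.Perm (Fin n × Bool)) ∈ WBgroup n := hG g.2
  simp only [Finset.sum_apply, Pi.add_apply, Fcoc_apply]
  rcases r with r' | k
  · fin_cases r'
    · simp [PhiP]
    · have ht : flipCount (g : Equiv.Perm (Fin n × Bool)) / 2 +
          flipCount (g : Equiv.Perm (Fin n × Bool)) / 2
          = flipCount (g : Equiv.Perm (Fin n × Bool)) := by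
        have := Nat.even_iff.mp (hD g g.2)
        omega
      simp only [PhiP, Matrix.of_apply]
      norm_num
      have hc1 : (Finset.filter (fun x : Fin n =>
          ((Equiv.symm (g : Equiv.Perm (Fin n × Bool))) (x, true)).2 = false) Finset.univ).card
          = flipCount (g : Equiv.Perm (Fin n × Bool)) := flipCount_inv hg
      rw [hc1]
      show ((flipCount (g : Equiv.Perm (Fin n × Bool)) / 2 : ℕ) : ℤ) +
        ((flipCount (g : Equiv.Perm (Fin n × Bool)) / 2 : ℕ) : ℤ) = _
      rw [← Nat.cast_add, ht]
      simp
  · simp only [PhiP, Matrix.of_apply]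
    norm_num
    cases h : ((g : Equiv.Perm (Fin n × Bool)) (k, true)).2 <;> simp [h]

def prF (g : Equiv.Perm (Fin n × Bool)) : Fin n → Fin n := fun i => (g (i, true)).1

lemma fst_apply {g : Equiv.Perm (Fin n × Bool)} (hg : g ∈ WBgroup n) (p : Fin n × Bool) :
    (g p).1 = prF g p.1 := by
  obtain ⟨x, s⟩ := p
  cases s
  · have := comm_apply hg x true
    simp only [Bool.not_true] at this
    rw [this]
    rfl
  · rfl

lemma prF_inj {g : Equiv.Perm (Fin n × Bool)} (hg : g ∈ WBgroup n) :
    Function.Injective (prF g) := by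
  intro a b hab
  unfold prF at hab
  by_cases hs : (g (a, true)).2 = (g (b, true)).2
  · have : g (a, true) = g (b, true) := Prod.ext hab hs
    have := g.injective this
    exact (Prod.ext_iff.mp this).1
  · exfalso
    have h1 : g (a, true) = ((g (b, true)).1, !(g (b, true)).2) := by
      have h2' : (g (a, true)).2 = !(g (b, true)).2 := by
        cases hb : (g (b, true)).2 <;> cases ha : (g (a, true)).2 <;> simp_all
      exact Prod.ext hab h2'
    have h2 := comm_apply hg b true
    simp only [Bool.not_true] at h2
    rw [← h2] at h1
    have := g.injective h1
    simp at this

lemma fst_pow {g : Equiv.Perm (Fin n × Bool)} (hg : g ∈ WBgroup n) (k : ℕ) (p : Fin n × Bool) :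
    ((g ^ k) p).1 = (prF g)^[k] p.1 := by
  induction k generalizing p with
  | zero => simp
  | succ m ih =>
    rw [pow_succ', Equiv.Perm.mul_apply, Function.iterate_succ_apply']
    rw [fst_apply hg, ih]

lemma orbit_eq {g : Equiv.Perm (Fin n × Bool)} (hg : g ∈ WBgroup n) (j : Fin n) :
    orbitOf g j = {i | ∃ k : ℕ, (prF g)^[k] j = i} := by
  ext i
  simp only [orbitOf, Set.mem_setOf_eq]
  constructor
  · rintro ⟨k, hk⟩; exact ⟨k, by rw [← fst_pow hg k (j, true)] ; exact hk⟩
  · rintro ⟨k, hk⟩; exact ⟨k, by rw [fst_pow hg k (j, true)]; exact hk⟩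

lemma orbit_iter {g : Equiv.Perm (Fin n × Bool)} (hg : g ∈ WBgroup n) {j i : Fin n}
    (hi : i ∈ orbitOf g j) (l : ℕ) : (prF g)^[l] i ∈ orbitOf g j := by
  rw [orbit_eq hg] at hi ⊢
  obtain ⟨k, hk⟩ := hi
  exact ⟨l + k, by rw [Function.iterate_add_apply, hk]⟩

lemma exists_iter_id {g : Equiv.Perm (Fin n × Bool)} (hg : g ∈ WBgroup n) :
    ∃ m : ℕ, 0 < m ∧ (prF g)^[m] = id := by
  have hbij : Function.Bijective (prF g) := Finite.injective_iff_bijective.mp (prF_inj hg)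
  let e : Equiv.Perm (Fin n) := Equiv.ofBijective _ hbij
  refine ⟨orderOf e, orderOf_pos e, ?_⟩
  have he : ∀ k : ℕ, ⇑(e ^ k) = (prF g)^[k] := by
    intro k
    induction k with
    | zero => simp
    | succ m ih => rw [pow_succ, Function.iterate_succ]
                   funext x
                   simp [Equiv.Perm.mul_apply, ← ih]
                   rfl
  rw [← he, pow_orderOf_eq_one e]
  rfl

lemma mem_orbit_iff_prF {g : Equiv.Perm (Fin n × Bool)} (hg : g ∈ WBgroup n) {j i : Fin n} :
    prF g i ∈ orbitOf g j ↔ i ∈ orbitOf g j := by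
  constructor
  · intro h
    obtain ⟨m, hm, hid⟩ := exists_iter_id hg
    have := orbit_iter hg h (m - 1)
    rwa [← Function.iterate_succ_apply, Nat.succ_eq_add_one, Nat.sub_add_cancel hm, hid,
      id_eq] at this
  · intro h
    have := orbit_iter hg h 1
    simpa using this

end Aux

/-- If some element of `G ⊆ W(D_n)` contains a signed permutation cycle with an odd
number of minus signs, then `f₋₁ ∉ ℤ⟨f_1,…,f_n⟩`, and consequently
`ℤ⟨f₋₁,f_1,…,f_n⟩ / ℤ⟨f_1,…,f_n⟩ ≅ ℤ/2`. -/
theorem stmt10 {n : ℕ} (G : Subgroup (Equiv.Perm (Fin n × Bool)))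
    (hG : G ≤ WBgroup n)
    (hD : ∀ g ∈ G, Even (flipCount g))
    (hodd : ∃ g ∈ G, ∃ j : Fin n, oddOrbitAt g j) :
    Fcoc G (Sum.inl 0) ∉
        AddSubgroup.closure (Set.range fun i : Fin n => Fcoc G (Sum.inr i)) ∧
      Nonempty
        ((AddSubgroup.closure
              (insert (Fcoc G (Sum.inl 0))
                (Set.range fun i : Fin n => Fcoc G (Sum.inr i))) ⧸
            (AddSubgroup.closure
                (Set.range fun i : Fin n => Fcoc G (Sum.inr i))).addSubgroupOf
              (AddSubgroup.closure
                (insert (Fcoc G (Sum.inl 0))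
                  (Set.range fun i : Fin n => Fcoc G (Sum.inr i))))) ≃+
          ZMod 2) := by
  classical
  obtain ⟨g₀, hg₀G, j, hoddj⟩ := hodd
  have hg₀ : g₀ ∈ WBgroup n := hG hg₀G
  set S : Set (G → ((Fin 2 ⊕ Fin n) → ℤ)) :=
    Set.range (fun i : Fin n => Fcoc G (Sum.inr i)) with hS
  set x : G → ((Fin 2 ⊕ Fin n) → ℤ) := Fcoc G (Sum.inl 0) with hx
  set O : Finset (Fin n) := Finset.univ.filter (· ∈ orbitOf g₀ j) with hOdef
  set gG : G := ⟨g₀, hg₀G⟩ with hgG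
  set φ : (G → ((Fin 2 ⊕ Fin n) → ℤ)) →+ ZMod 2 :=
    { toFun := fun F => ((∑ k ∈ O, F gG (Sum.inr k) : ℤ) : ZMod 2)
      map_zero' := by simp
      map_add' := by
        intro F1 F2
        simp only [Pi.add_apply, Finset.sum_add_distrib]
        push_cast
        ring } with hφdef
  -- φ kills each generator f_i
  have hφS : ∀ i : Fin n, φ (Fcoc G (Sum.inr i)) = 0 := by
    intro i
    have hbij : Function.Bijective (prF g₀) :=
      Finite.injective_iff_bijective.mp (prF_inj hg₀)
    obtain ⟨k₀, hk₀⟩ := hbij.2 i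
    have hmem : k₀ ∈ O ↔ i ∈ O := by
      simp only [hOdef, Finset.mem_filter, Finset.mem_univ, true_and]
      rw [← hk₀]
      exact (mem_orbit_iff_prF hg₀).symm
    have hsum : ∑ k ∈ O, Fcoc G (Sum.inr i) gG (Sum.inr k)
        = (if k₀ ∈ O then (if (g₀ (k₀, true)).2 = false then (-1 : ℤ) else 1) else 0)
          - (if i ∈ O then 1 else 0) := by
      simp only [Fcoc_apply, Finset.sum_sub_distrib]
      congr 1
      · rw [show (fun k : Fin n => PhiP (gG : Equiv.Perm (Fin n × Bool)) (Sum.inr k) (Sum.inr i))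
            = fun k => if k = k₀ then (if (g₀ (k, true)).2 = false then (-1 : ℤ) else 1) else 0
            from ?_]
        · rw [Finset.sum_ite_eq' O k₀]
        · funext k
          simp only [PhiP, Matrix.of_apply, hgG]
          by_cases hk : k = k₀
          · subst hk
            have h1 : i = (g₀ (k, true)).1 := hk₀.symm
            rw [if_pos h1, if_pos rfl]
          · have hne : i ≠ (g₀ (k, true)).1 := by
              rw [← hk₀]
              exact fun h => hk (prF_inj hg₀ h.symm)
            rw [if_neg hne, if_neg hk]
      · simp only [Sum.inr.injEq]
        rw [Finset.sum_ite_eq' O i (fun _ => (1:ℤ))]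
    simp only [hφdef, AddMonoidHom.coe_mk, ZeroHom.coe_mk, hsum]
    by_cases hiO : i ∈ O
    · rw [if_pos ((hmem).mpr hiO), if_pos hiO]
      cases hsig : (g₀ (k₀, true)).2 <;> simp [hsig] <;> decide
    · rw [if_neg (fun h => hiO (hmem.mp h)), if_neg hiO]
      simp
  -- φ sends f₋₁ to 1
  have hφx : φ x = 1 := by
    have hsum : ∑ k ∈ O, x gG (Sum.inr k)
        = -((O.filter fun k => (g₀ (k, true)).2 = false).card : ℤ) := by
      have hterm : ∀ k ∈ O, x gG (Sum.inr k)
          = -(if (g₀ (k, true)).2 = false then (1 : ℤ) else 0) := by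
        intro k _
        rw [hx, Fcoc_apply]
        simp only [PhiP, Matrix.of_apply, hgG]
        norm_num
        split <;> simp
      rw [Finset.sum_congr rfl hterm, Finset.sum_neg_distrib, Finset.sum_boole]
    have hcard : ((O.filter fun k => (g₀ (k, true)).2 = false).card : ℤ)
        = (Set.ncard {i | i ∈ orbitOf g₀ j ∧ (g₀ (i, true)).2 = false} : ℤ) := by
      congr 1
      rw [Set.ncard_eq_toFinset_card']
      congr 1
      ext k
      simp [hOdef, Set.mem_toFinset]
    obtain ⟨m, hm⟩ := hoddj
    simp only [hφdef, AddMonoidHom.coe_mk, ZeroHom.coe_mk]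
    rw [hsum, hcard, hm]
    push_cast
    ring_nf
    rw [show (2 : ZMod 2) = 0 from rfl]
    ring_nf
    decide
  -- closure S is killed by φ
  have hker : AddSubgroup.closure S ≤ φ.ker := by
    rw [AddSubgroup.closure_le]
    rintro F hF
    obtain ⟨i, rfl⟩ := hF
    simp only [SetLike.mem_coe, AddMonoidHom.mem_ker]
    exact hφS i
  constructor
  · intro hmem
    have h0 : φ x = 0 := hker hmem
    rw [hφx] at h0
    exact one_ne_zero h0
  · set B : AddSubgroup (G → ((Fin 2 ⊕ Fin n) → ℤ)) := AddSubgroup.closure S with hB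
    set A : AddSubgroup (G → ((Fin 2 ⊕ Fin n) → ℤ)) :=
      AddSubgroup.closure (insert x S) with hA
    have hxA : x ∈ A := AddSubgroup.subset_closure (Set.mem_insert _ _)
    have hrel : x + x = ∑ i : Fin n, Fcoc G (Sum.inr i) := rel G hG hD
    have hxxB : x + x ∈ B := by
      rw [hrel]
      exact AddSubgroup.sum_mem _ (fun i _ => AddSubgroup.subset_closure ⟨i, rfl⟩)
    have hmemB : ∀ a, a ∈ A → φ a = 0 → a ∈ B := by
      intro a haA ha0
      have hA' : A = AddSubgroup.closure {x} ⊔ B := by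
        rw [hA, hB, show insert x S = {x} ∪ S from rfl, AddSubgroup.closure_union]
      rw [hA', AddSubgroup.mem_sup] at haA
      obtain ⟨y, hy, z, hz, hyz⟩ := haA
      rw [AddSubgroup.mem_closure_singleton] at hy
      obtain ⟨kk, hkk⟩ := hy
      have hφz : φ z = 0 := hker hz
      have hφa : φ a = (kk : ZMod 2) := by
        rw [← hyz, map_add, ← hkk, map_zsmul, hφx, hφz, add_zero]
        simp [zsmul_eq_mul]
      rw [ha0] at hφa
      have hdvd : (2 : ℤ) ∣ kk := by
        have := (ZMod.intCast_zmod_eq_zero_iff_dvd kk 2).mp hφa.symm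
        exact_mod_cast this
      obtain ⟨c, hc⟩ := hdvd
      have hyB : y ∈ B := by
        rw [← hkk, hc, mul_comm, mul_smul, two_zsmul]
        exact B.zsmul_mem hxxB c
      rw [← hyz]
      exact B.add_mem hyB hz
    have hBA : B ≤ A := by
      rw [hA, hB]
      exact AddSubgroup.closure_mono (Set.subset_insert _ _)
    set ψ : A →+ ZMod 2 := φ.comp A.subtype with hψ
    have hlift : ∀ a ∈ B.addSubgroupOf A, ψ a = 0 := by
      intro a ha
      exact hker (AddSubgroup.mem_addSubgroupOf.mp ha)
    set q : (A ⧸ B.addSubgroupOf A) →+ ZMod 2 :=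
      QuotientAddGroup.lift (B.addSubgroupOf A) ψ (show B.addSubgroupOf A ≤ ψ.ker from fun a ha => AddMonoidHom.mem_ker.mpr (hlift a ha)) with hq
    have hinj : Function.Injective q := by
      rw [injective_iff_map_eq_zero]
      intro a ha
      induction a using QuotientAddGroup.induction_on with
      | H a =>
        rw [hq, QuotientAddGroup.lift_mk'] at ha
        have : (a : G → ((Fin 2 ⊕ Fin n) → ℤ)) ∈ B := hmemB _ a.2 ha
        exact (QuotientAddGroup.eq_zero_iff a).mpr (AddSubgroup.mem_addSubgroupOf.mpr this)
    have hsurj : Function.Surjective q := by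
      intro c
      have hc2 : c = 0 ∨ c = 1 := by
        rcases c with ⟨cv, hcv⟩
        interval_cases cv
        · exact Or.inl rfl
        · exact Or.inr rfl
      rcases hc2 with rfl | rfl
      · exact ⟨0, map_zero q⟩
      · refine ⟨QuotientAddGroup.mk ⟨x, hxA⟩, ?_⟩
        rw [hq, QuotientAddGroup.lift_mk']
        simpa [hψ] using hφx
    exact ⟨AddEquiv.ofBijective q ⟨hinj, hsurj⟩⟩
end

section
/- Let g = c_{j_1}···c_{j_t}·(1 2 ... w)·β' ∈ W(D_n) with t odd and the cycle supported on {1,...,w}, and let s be its sign function with s(w) = 1. Then the cyclic system of equations over Z, α_u·(−1) + α_{u+1}·s(u) = (s(u)−1)/2 for u = 1,...,w (indices mod w), has no integer solution (α_1,...,α_w): any solution forces α_1 = 1 − α_1, i.e., α_1 = 1/2. -/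
/-- For a sign function `s` on a cycle of length `w` with an odd number `t` of values
`-1` and `s(w) = 1`, the cyclic system `-α_u + α_{u+1}·s(u) = (s(u)-1)/2` (indices mod
`w`) has no integer solution: any solution would force `α₁ = 1 - α₁`, i.e. `α₁ = 1/2`. -/
theorem stmt13 {w t : ℕ} [NeZero w] (s : Fin w → ℤ)
    (hs : ∀ u, s u = 1 ∨ s u = -1)
    (hcard : (Finset.univ.filter fun u => s u = -1).card = t)
    (ht : Odd t)
    (hlast : s ⟨w - 1, Nat.sub_lt (Nat.pos_of_ne_zero (NeZero.ne w)) Nat.one_pos⟩ = 1) :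
    ¬ ∃ α : Fin w → ℤ, ∀ u : Fin w,
        α u * (-1) + α (u + 1) * s u = (s u - 1) / 2 := by
  rintro ⟨α, hα⟩
  have key : ∀ u : Fin w, ((α (u + 1) : ZMod 2)) =
      (α u : ZMod 2) + (if s u = -1 then 1 else 0) := by
    intro u
    rcases hs u with h | h
    · have h1 := hα u
      rw [h] at h1
      have h2 : α (u + 1) = α u := by omega
      simp [h, h2]
    · have h1 := hα u
      rw [h] at h1
      have h2 : α (u + 1) = 1 - α u := by omega
      rw [if_pos h, h2]
      push_cast
      have h3 : (2 : ZMod 2) = 0 := rfl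
      linear_combination (-(α u : ZMod 2)) * h3
  have hsum1 : ∑ u : Fin w, ((α (u + 1) : ZMod 2)) = ∑ u : Fin w, (α u : ZMod 2) :=
    Fintype.sum_equiv (Equiv.addRight 1) _ _ (fun u => rfl)
  have hsum2 : ∑ u : Fin w, ((α (u + 1) : ZMod 2)) =
      ∑ u : Fin w, ((α u : ZMod 2) + (if s u = -1 then 1 else 0)) :=
    Finset.sum_congr rfl (fun u _ => key u)
  rw [Finset.sum_add_distrib, Finset.sum_boole, hcard] at hsum2
  have h0 : ((t : ℕ) : ZMod 2) = 0 := by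
    have := hsum1.symm.trans hsum2
    exact (left_eq_add.mp this)
  have h2 : (2 : ℕ) ∣ t := (ZMod.natCast_eq_zero_iff t 2).mp h0
  exact (Nat.not_even_iff_odd.mpr ht) (even_iff_two_dvd.mpr h2)
end

section
/- Let G ⊂ W(D_n) act on Pic = Z^{n+2} via Φ and suppose ξ = (1/2)Σ_{i∈I} f_i ∈ Z^1(G,Pic) represents a nonzero class in H^1(G,Pic), where I ⊆ {1,...,n}. Then I is a union of orbits of the action of pr(G) ⊆ S_n on {1,...,n}: if i ∈ I and j lies in the same pr(G)-orbit as i, then j ∈ I. -/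
lemma mulVec_stdBasis {n : ℕ} (M : Matrix (Fin 2 ⊕ Fin n) (Fin 2 ⊕ Fin n) ℤ)
    (idx r : Fin 2 ⊕ Fin n) : M.mulVec (stdBasis idx) r = M r idx := by
  simp [Matrix.mulVec, dotProduct, stdBasis]

/-- If `ξ = (1/2)·Σ_{i∈I} f_i` (with `I ⊆ {1,…,n}`) is a `1`-cocycle of `G ⊆ W(D_n)`
representing a nonzero class of `H¹(G, Pic)`, then `I` is a union of orbits of
`pr(G)` on `{1,…,n}`: if `i ∈ I` and `j` is in the same `pr(G)`-orbit, then `j ∈ I`. -/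
theorem stmt16 {n : ℕ} (G : Subgroup (Equiv.Perm (Fin n × Bool)))
    (hG : G ≤ WBgroup n)
    (hD : ∀ g ∈ G, Even (flipCount g))
    (I : Finset (Fin n))
    (ξ : G → ((Fin 2 ⊕ Fin n) → ℤ))
    (hcoc : ∀ a b : G, ξ (a * b) = ξ a + PhiL (a : Equiv.Perm (Fin n × Bool)) (ξ b))
    (hhalf : ∀ a : G, (2 : ℤ) • ξ a = ∑ i ∈ I, Fcoc G (Sum.inr i) a)
    (hnz : ¬ ∃ v, ∀ a : G, ξ a = PhiL (a : Equiv.Perm (Fin n × Bool)) v - v) :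
    ∀ i ∈ I, ∀ j : Fin n, (∃ g ∈ G, (g (i, true)).1 = j) → j ∈ I := by
  intro i hi j ⟨g, hg, hgij⟩
  by_contra hj
  have h := congrFun (hhalf ⟨g, hg⟩) (Sum.inr i)
  simp only [Pi.smul_apply, Finset.sum_apply, Fcoc, PhiL, Matrix.mulVecLin_apply,
    Pi.sub_apply] at h
  have hrw : ∀ i' : Fin n,
      (PhiP g).mulVec (stdBasis (Sum.inr i')) (Sum.inr i) - stdBasis (Sum.inr i') (Sum.inr i)
      = (if i' = j then (if (g (i, true)).2 = false then (-1 : ℤ) else 1) else 0)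
        - (if i' = i then 1 else 0) := by
    intro i'
    rw [mulVec_stdBasis]
    simp only [PhiP, Matrix.of_apply, stdBasis, hgij, Sum.inr.injEq]
    congr 1
    by_cases hii : i = i' <;> simp [hii, eq_comm]
  rw [Finset.sum_congr rfl (fun i' _ => hrw i')] at h
  rw [Finset.sum_sub_distrib, Finset.sum_ite_eq' I j, Finset.sum_ite_eq' I i] at h
  simp only [hj, hi, if_true, if_false, if_neg, smul_eq_mul, ite_false] at h
  omega
end

section
/- Let G ⊂ W(D_n) be a subgroup satisfying H^1(H, Pic) = 0 for all H ⊆ G and the relative minimality condition Pic^G = Z·l_0 ⊕ Z·K, and let O ⊆ {1,...,n} be an orbit of pr(G) of size n'. Then the map P_O sending g = β_{(g,1)}···β_{(g,R_g)} (disjoint signed cycle decomposition, with β_{(g,1)},...,β_{(g,r_g)} supported on O) to β_{(g,1)}···β_{(g,r_g)}·c_{n'+1} if σ(β_{(g,1)}···β_{(g,r_g)}) = −1 and to β_{(g,1)}···β_{(g,r_g)} otherwise, is a group homomorphism from G to W(D_{n'+1}), and its image is a group. -/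
/-- The class `l₀` of a fiber, as a vector in `ℤ^{m+2}`. -/
def l0vec (m : ℕ) : (Fin 2 ⊕ Fin m) → ℤ :=
  Sum.elim (fun r => if r = 1 then 1 else 0) (fun _ => 0)

/-- The canonical class `K = -2(l₋₁ + l₀) + Σ l_i`, as a vector in `ℤ^{m+2}`. -/
def Kvec (m : ℕ) : (Fin 2 ⊕ Fin m) → ℤ :=
  Sum.elim (fun _ => -2) (fun _ => 1)

section AuxStmt17

theorem flipPerm_apply {m : ℕ} (x : Fin m × Bool) : flipPerm m x = (x.1, !x.2) := by
  rcases x with ⟨j, b⟩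
  cases b <;> simp [flipPerm]

def sgnB {n : ℕ} (O : Finset (Fin n)) (g : Equiv.Perm (Fin n × Bool)) : Bool :=
  decide (Odd ((O.filter fun i => (g (i, true)).2 = false).card))

def Scnt {n : ℕ} (O : Finset (Fin n)) (g : Equiv.Perm (Fin n × Bool)) : ZMod 2 :=
  ∑ i ∈ O, (if (g (i, true)).2 = false then 1 else 0)

theorem cast2 (m : ℕ) : ((m : ZMod 2)) = if Odd m then 1 else 0 := by
  rcases Nat.mod_two_eq_zero_or_one m with h | h <;>
    rw [← ZMod.natCast_mod m 2, h] <;> simp [Nat.odd_iff, h]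

theorem even_of_cast (m : ℕ) (hm : (m : ZMod 2) = 0) : Even m := by
  rcases Nat.even_or_odd m with h | h
  · exact h
  · rw [cast2, if_pos h] at hm; exact absurd hm one_ne_zero

theorem Scnt_eq {n : ℕ} (O : Finset (Fin n)) (g : Equiv.Perm (Fin n × Bool)) :
    ((O.filter fun i => (g (i, true)).2 = false).card : ZMod 2) = Scnt O g := by
  rw [Finset.card_filter]
  push_cast [Scnt]
  exact Finset.sum_congr rfl fun i _ => by split <;> simp

theorem Scnt_sgn {n : ℕ} (O : Finset (Fin n)) (g : Equiv.Perm (Fin n × Bool)) :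
    Scnt O g = if sgnB O g then 1 else 0 := by
  rw [← Scnt_eq, cast2, sgnB]
  simp

theorem pr_inv_pr {n : ℕ} (h : Equiv.Perm (Fin n × Bool))
    (hhf : ∀ (j : Fin n) (b : Bool), h (j, !b) = ((h (j, b)).1, !(h (j, b)).2))
    (i : Fin n) : (h⁻¹ ((h (i, true)).1, true)).1 = i := by
  rcases hp : h (i, true) with ⟨j, c⟩
  cases c
  · have h2 : h (i, false) = (j, true) := by
      have := hhf i true; rw [hp] at this; simpa using this
    rw [← h2, Equiv.Perm.inv_def, Equiv.symm_apply_apply]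
  · rw [← hp, Equiv.Perm.inv_def, Equiv.symm_apply_apply]

theorem pr_pr_inv {n : ℕ} (h : Equiv.Perm (Fin n × Bool))
    (hhf : ∀ (j : Fin n) (b : Bool), h (j, !b) = ((h (j, b)).1, !(h (j, b)).2))
    (i : Fin n) : (h ((h⁻¹ (i, true)).1, true)).1 = i := by
  rcases hp : h⁻¹ (i, true) with ⟨j, c⟩
  have hji : h (j, c) = (i, true) := by rw [← hp, Equiv.Perm.inv_def, Equiv.apply_symm_apply]
  cases c
  · have := hhf j false
    rw [hji] at this
    simp only [Bool.not_false] at this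
    rw [this]
  · rw [hji]

theorem Scnt_mul {n : ℕ} (O : Finset (Fin n)) (g h : Equiv.Perm (Fin n × Bool))
    (hgf : ∀ (j : Fin n) (b : Bool), g (j, !b) = ((g (j, b)).1, !(g (j, b)).2))
    (hhf : ∀ (j : Fin n) (b : Bool), h (j, !b) = ((h (j, b)).1, !(h (j, b)).2))
    (hhO : ∀ i ∈ O, (h (i, true)).1 ∈ O)
    (hhO' : ∀ i ∈ O, (h⁻¹ (i, true)).1 ∈ O) :
    Scnt O (g * h) = Scnt O g + Scnt O h := by
  have point : ∀ i : Fin n, (if ((g * h) (i, true)).2 = false then (1 : ZMod 2) else 0)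
      = (if (g ((h (i, true)).1, true)).2 = false then 1 else 0)
        + (if (h (i, true)).2 = false then 1 else 0) := by
    intro i
    rw [Equiv.Perm.mul_apply]
    rcases hp : h (i, true) with ⟨j, c⟩
    cases c
    · have h2 : g (j, false) = ((g (j, true)).1, !(g (j, true)).2) := by
        have := hgf j true; simpa using this
      rw [h2]
      cases hgs : (g (j, true)).2 <;> simp [hgs] <;> decide
    · simp
  have reidx : ∑ i ∈ O, (if (g ((h (i, true)).1, true)).2 = false then (1 : ZMod 2) else 0)
      = Scnt O g := by
    refine Finset.sum_nbij' (i := fun i => (h (i, true)).1)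
      (j := fun i => (h⁻¹ (i, true)).1) (fun a ha => hhO a ha) (fun a ha => hhO' a ha)
      (fun a _ => pr_inv_pr h hhf a) (fun a _ => pr_pr_inv h hhf a) ?_
    intro a _
    rfl
  calc Scnt O (g * h)
      = ∑ i ∈ O, ((if (g ((h (i, true)).1, true)).2 = false then (1 : ZMod 2) else 0)
        + (if (h (i, true)).2 = false then 1 else 0)) :=
        Finset.sum_congr rfl fun i _ => point i
    _ = Scnt O g + Scnt O h := by rw [Finset.sum_add_distrib, reidx]; rfl

theorem sgnB_mul {n : ℕ} (O : Finset (Fin n)) (g h : Equiv.Perm (Fin n × Bool))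
    (hgf : ∀ (j : Fin n) (b : Bool), g (j, !b) = ((g (j, b)).1, !(g (j, b)).2))
    (hhf : ∀ (j : Fin n) (b : Bool), h (j, !b) = ((h (j, b)).1, !(h (j, b)).2))
    (hhO : ∀ i ∈ O, (h (i, true)).1 ∈ O)
    (hhO' : ∀ i ∈ O, (h⁻¹ (i, true)).1 ∈ O) :
    sgnB O (g * h) = xor (sgnB O g) (sgnB O h) := by
  have h1 := Scnt_mul O g h hgf hhf hhO hhO'
  rw [Scnt_sgn, Scnt_sgn, Scnt_sgn] at h1
  cases hgs : sgnB O g <;> cases hhs : sgnB O h <;> rw [hgs, hhs] at h1 <;>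
    cases hghs : sgnB O (g * h) <;> rw [hghs] at h1 <;>
      first | rfl | (exfalso; revert h1; decide)

def Fmap {n N : ℕ} (O : Finset (Fin n)) (ι : Fin N → Fin n)
    (einv : {x // x ∈ O} → Fin N) (g : Equiv.Perm (Fin n × Bool))
    (hmem : ∀ (k : Fin N) (b : Bool), (g (ι k, b)).1 ∈ O) :
    Fin (N + 1) × Bool → Fin (N + 1) × Bool := fun x =>
  if hx : x.1 = Fin.last N then (Fin.last N, xor (sgnB O g) x.2)
  else
    (Fin.castSucc (einv ⟨(g (ι (x.1.castPred hx), x.2)).1, hmem _ _⟩),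
      (g (ι (x.1.castPred hx), x.2)).2)

theorem Fmap_cast {n N : ℕ} (O : Finset (Fin n)) (ι : Fin N → Fin n)
    (einv : {x // x ∈ O} → Fin N) (g : Equiv.Perm (Fin n × Bool))
    (hmem : ∀ (k : Fin N) (b : Bool), (g (ι k, b)).1 ∈ O) (k : Fin N) (b : Bool) :
    Fmap O ι einv g hmem (Fin.castSucc k, b) =
      (Fin.castSucc (einv ⟨(g (ι k, b)).1, hmem k b⟩), (g (ι k, b)).2) := by
  unfold Fmap
  rw [dif_neg (Fin.castSucc_lt_last k).ne]
  simp [Fin.castPred_castSucc]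

theorem Fmap_last {n N : ℕ} (O : Finset (Fin n)) (ι : Fin N → Fin n)
    (einv : {x // x ∈ O} → Fin N) (g : Equiv.Perm (Fin n × Bool))
    (hmem : ∀ (k : Fin N) (b : Bool), (g (ι k, b)).1 ∈ O) (b : Bool) :
    Fmap O ι einv g hmem (Fin.last N, b) = (Fin.last N, xor (sgnB O g) b) := by
  unfold Fmap
  rw [dif_pos rfl]

end AuxStmt17


/-- Let `G ⊆ W(D_n)` satisfy (H1) and relative minimality, and let `O` be an orbit of
`pr(G)` of size `n'` (enumerated by `ι`).  Then the projection `P_O` — sending `g` to the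
product of its signed cycles supported on `O`, with an extra flip `c_{n'+1}` appended
exactly when that `O`-part has sign `-1` — is a group homomorphism from `G` to
`W(D_{n'+1})` (its image is in particular a group). -/
theorem stmt17 {n : ℕ} (G : Subgroup (Equiv.Perm (Fin n × Bool)))
    (hG : G ≤ WBgroup n)
    (hD : ∀ g ∈ G, Even (flipCount g))
    (hH1 : ∀ H : Subgroup (Equiv.Perm (Fin n × Bool)), H ≤ G →
      ∀ f : H → ((Fin 2 ⊕ Fin n) → ℤ),
        (∀ a b : H, f (a * b) = f a + PhiL (a : Equiv.Perm (Fin n × Bool)) (f b)) →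
          ∃ v, ∀ a : H, f a = PhiL (a : Equiv.Perm (Fin n × Bool)) v - v)
    (hrelmin : ∀ v : (Fin 2 ⊕ Fin n) → ℤ,
      (∀ g ∈ G, (PhiP g).mulVec v = v) → ∃ a b : ℤ, v = a • l0vec n + b • Kvec n)
    (O : Finset (Fin n)) (hOne : O.Nonempty)
    (hOrb : ∀ i ∈ O, ∀ j : Fin n, (j ∈ O ↔ ∃ g ∈ G, (g (i, true)).1 = j))
    (ι : Fin O.card → Fin n) (hιmem : ∀ k, ι k ∈ O) (hιinj : Function.Injective ι) :
    ∃ P : G →* Equiv.Perm (Fin (O.card + 1) × Bool),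
      (∀ g : G, P g ∈ WBgroup (O.card + 1)) ∧
      (∀ g : G, Even (flipCount (P g))) ∧
      (∀ g : G, ∀ k : Fin O.card, ∀ b : Bool,
        ∃ m : Fin O.card,
          ι m = ((g : Equiv.Perm (Fin n × Bool)) (ι k, b)).1 ∧
          P g (Fin.castSucc k, b) =
            (Fin.castSucc m, ((g : Equiv.Perm (Fin n × Bool)) (ι k, b)).2)) ∧
      (∀ g : G, ∀ b : Bool,
        P g (Fin.last O.card, b) =
          (Fin.last O.card,
            if Odd ((O.filter fun i =>
                ((g : Equiv.Perm (Fin n × Bool)) (i, true)).2 = false).card)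
            then !b else b)) := by
  classical
  -- flip equivariance of elements of G
  have hflip : ∀ g : Equiv.Perm (Fin n × Bool), g ∈ G → ∀ (j : Fin n) (b : Bool),
      g (j, !b) = ((g (j, b)).1, !(g (j, b)).2) := by
    intro g hg j b
    have h2 : flipPerm n * g = g * flipPerm n :=
      Subgroup.mem_centralizer_iff.mp (hG hg) (flipPerm n) rfl
    have h3 : flipPerm n (g (j, b)) = g (flipPerm n (j, b)) := by
      have := congrArg (fun q : Equiv.Perm (Fin n × Bool) => q (j, b)) h2
      simpa [Equiv.Perm.mul_apply] using this
    simp only [flipPerm_apply] at h3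
    exact h3.symm
  -- O is invariant
  have hmemO : ∀ g : Equiv.Perm (Fin n × Bool), g ∈ G → ∀ i ∈ O, ∀ b : Bool,
      (g (i, b)).1 ∈ O := by
    intro g hg i hi b
    have htrue : ((g (i, true)).1) ∈ O := (hOrb i hi _).mpr ⟨g, hg, rfl⟩
    cases b
    · rw [show ((i, false) : Fin n × Bool) = (i, !true) from rfl, hflip g hg i true]
      exact htrue
    · exact htrue
  -- the enumeration is a bijection onto O
  have hbij : Function.Bijective
      (fun k : Fin O.card => (⟨ι k, hιmem k⟩ : {x // x ∈ O})) := by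
    rw [Fintype.bijective_iff_injective_and_card]
    exact ⟨fun a b hab => hιinj (by simpa using congrArg Subtype.val hab),
      by simp [Fintype.card_coe]⟩
  let e : Fin O.card ≃ {x // x ∈ O} := Equiv.ofBijective _ hbij
  have hesymm : ∀ (j : Fin n) (hj : j ∈ O), ι (e.symm ⟨j, hj⟩) = j := by
    intro j hj
    have := congrArg Subtype.val (e.apply_symm_apply ⟨j, hj⟩)
    simpa [e, Equiv.ofBijective] using this
  have hιsurj : ∀ j ∈ O, ∃ k, ι k = j := by
    intro j hj
    exact ⟨e.symm ⟨j, hj⟩, hesymm j hj⟩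
  have hmemFor : ∀ g : G, ∀ (k : Fin O.card) (b : Bool),
      ((g : Equiv.Perm (Fin n × Bool)) (ι k, b)).1 ∈ O :=
    fun g k b => hmemO g g.2 (ι k) (hιmem k) b
  -- multiplicativity of Fmap
  have Fmul : ∀ g h : G, ∀ x,
      Fmap O ι (⇑e.symm) ((g * h : G) : Equiv.Perm (Fin n × Bool)) (hmemFor (g * h)) x
        = Fmap O ι (⇑e.symm) (g : Equiv.Perm (Fin n × Bool)) (hmemFor g)
            (Fmap O ι (⇑e.symm) (h : Equiv.Perm (Fin n × Bool)) (hmemFor h) x) := by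
    intro g h x
    rcases x with ⟨a, b⟩
    induction a using Fin.lastCases with
    | last =>
      rw [Fmap_last, Fmap_last, Fmap_last]
      have hs : sgnB O ((g * h : G) : Equiv.Perm (Fin n × Bool))
          = xor (sgnB O (g : Equiv.Perm (Fin n × Bool)))
              (sgnB O (h : Equiv.Perm (Fin n × Bool))) := by
        have := sgnB_mul O (g : Equiv.Perm (Fin n × Bool)) (h : Equiv.Perm (Fin n × Bool))
          (hflip _ g.2) (hflip _ h.2) (fun i hi => hmemO _ h.2 i hi true)
          (fun i hi => hmemO _ (inv_mem h.2) i hi true)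
        exact this
      rw [hs, Bool.xor_assoc]
    | cast k =>
      rw [Fmap_cast, Fmap_cast, Fmap_cast]
      have hιm : ι (e.symm ⟨((h : Equiv.Perm (Fin n × Bool)) (ι k, b)).1, hmemFor h k b⟩)
          = ((h : Equiv.Perm (Fin n × Bool)) (ι k, b)).1 := hesymm _ _
      have key : (g : Equiv.Perm (Fin n × Bool))
          (ι (e.symm ⟨((h : Equiv.Perm (Fin n × Bool)) (ι k, b)).1, hmemFor h k b⟩),
            ((h : Equiv.Perm (Fin n × Bool)) (ι k, b)).2)
          = ((g * h : G) : Equiv.Perm (Fin n × Bool)) (ι k, b) := by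
        rw [hιm, Prod.mk.eta]
        rfl
      refine Prod.ext ?_ ?_
      · exact congrArg Fin.castSucc
          (congrArg e.symm (Subtype.ext (congrArg Prod.fst key).symm))
      · exact (congrArg Prod.snd key).symm
  -- Fmap of the identity
  have Fone : ∀ x, Fmap O ι (⇑e.symm) ((1 : G) : Equiv.Perm (Fin n × Bool)) (hmemFor 1) x
      = x := by
    rintro ⟨a, b⟩
    induction a using Fin.lastCases with
    | last =>
      rw [Fmap_last]
      have hsgn1 : sgnB O ((1 : G) : Equiv.Perm (Fin n × Bool)) = false := by
        simp [sgnB, Nat.odd_iff]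
      rw [hsgn1]
      simp
    | cast k =>
      rw [Fmap_cast]
      have h1 : ((1 : G) : Equiv.Perm (Fin n × Bool)) (ι k, b) = (ι k, b) := rfl
      refine Prod.ext ?_ ?_
      · show Fin.castSucc (e.symm _) = Fin.castSucc k
        apply congrArg
        have h2 : (⟨(((1 : G) : Equiv.Perm (Fin n × Bool)) (ι k, b)).1, hmemFor 1 k b⟩ :
            {x // x ∈ O}) = e k := Subtype.ext (congrArg Prod.fst h1)
        rw [h2, Equiv.symm_apply_apply]
      · show (((1 : G) : Equiv.Perm (Fin n × Bool)) (ι k, b)).2 = b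
        rw [h1]
  -- the permutations
  let Pfun : G → Equiv.Perm (Fin (O.card + 1) × Bool) := fun g =>
    { toFun := Fmap O ι (⇑e.symm) (g : Equiv.Perm (Fin n × Bool)) (hmemFor g)
      invFun := Fmap O ι (⇑e.symm) ((g⁻¹ : G) : Equiv.Perm (Fin n × Bool)) (hmemFor g⁻¹)
      left_inv := fun x => by
        have h1 := Fmul g⁻¹ g x
        have hgg : g⁻¹ * g = (1 : G) := by group
        rw [hgg] at h1
        rw [← h1, Fone]
      right_inv := fun x => by
        have h1 := Fmul g g⁻¹ x
        have hgg : g * g⁻¹ = (1 : G) := by group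
        rw [hgg] at h1
        rw [← h1, Fone] }
  have Papp : ∀ (g : G) (x : Fin (O.card + 1) × Bool),
      Pfun g x = Fmap O ι (⇑e.symm) (g : Equiv.Perm (Fin n × Bool)) (hmemFor g) x :=
    fun g x => rfl
  let PM : G →* Equiv.Perm (Fin (O.card + 1) × Bool) :=
    MonoidHom.mk' Pfun (fun g h => Equiv.ext fun x => Fmul g h x)
  have PMapp : ∀ (g : G) (x : Fin (O.card + 1) × Bool),
      PM g x = Fmap O ι (⇑e.symm) (g : Equiv.Perm (Fin n × Bool)) (hmemFor g) x :=
    fun g x => rfl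
  refine ⟨PM, ?_, ?_, ?_, ?_⟩
  · -- membership in WBgroup
    intro g
    rw [WBgroup, Subgroup.mem_centralizer_iff]
    rintro s hs
    rw [Set.mem_singleton_iff] at hs
    subst hs
    apply Equiv.ext
    rintro ⟨a, b⟩
    show flipPerm (O.card + 1) (PM g (a, b)) = PM g (flipPerm (O.card + 1) (a, b))
    rw [flipPerm_apply, flipPerm_apply]
    show ((PM g (a, b)).1, !(PM g (a, b)).2) = PM g (a, !b)
    induction a using Fin.lastCases with
    | last =>
      rw [PMapp, PMapp, Fmap_last, Fmap_last]
      refine Prod.ext rfl ?_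
      cases hsg : sgnB O (g : Equiv.Perm (Fin n × Bool)) <;> cases b <;> rfl
    | cast k =>
      rw [PMapp, PMapp, Fmap_cast, Fmap_cast]
      have hfl := hflip _ g.2 (ι k) b
      refine Prod.ext ?_ ?_
      · exact congrArg Fin.castSucc
          (congrArg e.symm (Subtype.ext (congrArg Prod.fst hfl).symm))
      · exact (congrArg Prod.snd hfl).symm
  · -- evenness of the flip count
    intro g
    apply even_of_cast
    have hcast : (flipCount (PM g) : ZMod 2)
        = ∑ j : Fin (O.card + 1),
            (if ((PM g) (j, true)).2 = false then (1 : ZMod 2) else 0) := by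
      rw [flipCount, Finset.card_filter]
      push_cast
      exact Finset.sum_congr rfl fun i _ => by split <;> simp
    rw [hcast, Fin.sum_univ_castSucc]
    have hterm : ∀ i : Fin O.card,
        (if ((PM g) (Fin.castSucc i, true)).2 = false then (1 : ZMod 2) else 0)
          = (if ((g : Equiv.Perm (Fin n × Bool)) (ι i, true)).2 = false then 1 else 0) := by
      intro i
      rw [PMapp, Fmap_cast]
    have hsum : ∑ i : Fin O.card,
        (if ((g : Equiv.Perm (Fin n × Bool)) (ι i, true)).2 = false then (1 : ZMod 2) else 0)
          = Scnt O (g : Equiv.Perm (Fin n × Bool)) := by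
      refine Finset.sum_bij (fun k _ => ι k) (fun k _ => hιmem k)
        (fun a _ b _ hab => hιinj hab) ?_ (fun k _ => rfl)
      intro j hj
      obtain ⟨k, hk⟩ := hιsurj j hj
      exact ⟨k, Finset.mem_univ k, hk⟩
    have hlast : (if ((PM g) (Fin.last O.card, true)).2 = false then (1 : ZMod 2) else 0)
        = Scnt O (g : Equiv.Perm (Fin n × Bool)) := by
      rw [PMapp, Fmap_last, Scnt_sgn]
      cases hsg : sgnB O (g : Equiv.Perm (Fin n × Bool)) <;> simp
    rw [Finset.sum_congr rfl fun i _ => hterm i, hsum, hlast, Scnt_sgn]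
    cases hsg : sgnB O (g : Equiv.Perm (Fin n × Bool)) <;> decide
  · -- action on the castSucc part
    intro g k b
    refine ⟨e.symm ⟨((g : Equiv.Perm (Fin n × Bool)) (ι k, b)).1, hmemFor g k b⟩,
      hesymm _ _, ?_⟩
    rw [PMapp, Fmap_cast]
  · -- action on the last index
    intro g b
    rw [PMapp, Fmap_last]
    by_cases hodd : Odd ((O.filter fun i =>
        ((g : Equiv.Perm (Fin n × Bool)) (i, true)).2 = false).card) <;>
      simp [sgnB, hodd]
end
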